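/- arXiv:2507.17366 — 2 statements merged into one kernel-verified Lean document; each statement's English description precedes it below -/
import Mathlib

section
/- Let 𝒳 = {0,1}, let μ_0 = Bern(β_0) with β_0 ∈ (0, 1/2], Γ ≥ 0, and consider Hamming distortion δ(x,y) = 1_{x≠y}. Let β* be the maximizer of the binary entropy h_b over the set B = {β ∈ [0,1] : d(β‖β_0) ≤ Γ}; equivalently β* = ( 1 + ((1−β_0)/β_0)^{λ/(1+λ)} )^{−1} where λ ≥ 0 is chosen so that Bern(β*) ∈ 𝒮(Γ) (with λ = 0, i.e. β* = 1/2, when d(1/2‖β_0) ≤ Γ). Then for every D with 0 < D < β*, the robust rate–distortion function satisfies R⁻(D) = h_b(β*) − h_b(D). -/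
open MeasureTheory
open scoped ENNReal

/-- Binary entropy function (natural logarithm). -/
noncomputable def entB (β : ℝ) : ℝ :=
  -(β * Real.log β) - (1 - β) * Real.log (1 - β)

/-- Kullback–Leibler divergence (natural logarithm) between pmfs on `Bool` (the nominal
distributions considered here have full support, so no absolute-continuity proviso is
needed). -/
noncomputable def klDivB (p r : PMF Bool) : ℝ :=
  ∑' a, (p a).toReal * Real.log ((p a).toReal / (r a).toReal)

/-- Mutual information (natural logarithm) of a source pmf `μ` on `Bool` and a Markov
kernel `Q` from `Bool` to `Bool`:
`I(μ,Q) = ∑_{x,y} μ(x)Q(y|x) log (Q(y|x)/q(y))` with `q = μ.bind Q`. -/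
noncomputable def mutInfoB (μ : PMF Bool) (Q : Bool → PMF Bool) : ℝ :=
  ∑' p : Bool × Bool,
    ((μ p.1) * (Q p.1 p.2)).toReal *
      Real.log ((Q p.1 p.2).toReal / ((μ.bind Q) p.2).toReal)

/-- Expected Hamming distortion `∑_{x,y} μ(x) Q(y|x) 1_{x ≠ y}`. -/
noncomputable def hamDistortion (μ : PMF Bool) (Q : Bool → PMF Bool) : ℝ :=
  ∑' p : Bool × Bool, ((μ p.1) * (Q p.1 p.2)).toReal * (if p.1 = p.2 then 0 else 1)

/-- The KL-sphere `𝒮(Γ)` of radius `Γ` around the nominal pmf `μ₀` on `{0,1}`. -/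
def sphereB (μ₀ : PMF Bool) (Γ : ℝ) : Set (PMF Bool) :=
  {μ | klDivB μ μ₀ ≤ Γ}

/-- The robust constraint set `𝓛(D)`: kernels with expected Hamming distortion at most `D`
under every source in `𝒮(Γ)`. -/
def hamKernelSet (μ₀ : PMF Bool) (Γ D : ℝ) : Set (Bool → PMF Bool) :=
  {Q | ∀ μ ∈ sphereB μ₀ Γ, hamDistortion μ Q ≤ D}

/-- The robust rate–distortion function
`R⁻(D) = sup_{μ ∈ 𝒮(Γ)} inf_{Q ∈ 𝓛(D)} I(μ, Q)` for a binary source. -/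
noncomputable def RminusB (μ₀ : PMF Bool) (Γ D : ℝ) : ℝ :=
  sSup {r | ∃ μ ∈ sphereB μ₀ Γ,
    r = sInf {v | ∃ Q ∈ hamKernelSet μ₀ Γ D, v = mutInfoB μ Q}}


/-! ### Auxiliary lemmas -/

section Aux
open Real

lemma ls_pt {p r : ℝ} (hp : 0 ≤ p) (hr : 0 ≤ r) (h : p ≠ 0 → 0 < r) :
    p - r ≤ p * Real.log (p / r) := by
  rcases eq_or_lt_of_le hp with h0 | h0
  · rw [← h0]; simpa using hr
  · have hrpos := h (ne_of_gt h0)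
    have hle := Real.log_le_sub_one_of_pos (show 0 < r/p by positivity)
    have hlog : Real.log (p/r) = - Real.log (r/p) := by
      rw [← Real.log_inv]; congr 1; field_simp
    have : 1 - r/p ≤ Real.log (p/r) := by rw [hlog]; linarith
    calc p - r = p * (1 - r/p) := by field_simp
    _ ≤ p * Real.log (p/r) := by apply mul_le_mul_of_nonneg_left this hp

lemma term_id {c a q : ℝ} (hc : 0 ≤ c) (ha : 0 ≤ a) (hq : c * a ≤ q) :
    c * a * Real.log (a / q) = c * a * Real.log (c * a) - c * a * Real.log c - c * a * Real.log q := by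
  rcases eq_or_lt_of_le (mul_nonneg hc ha) with h0 | h0
  · rw [← h0]; ring
  · have hcne : c ≠ 0 := by rintro rfl; simp at h0
    have hane : a ≠ 0 := by rintro rfl; simp at h0
    have hqne : q ≠ 0 := by intro h; rw [h] at hq; linarith
    rw [Real.log_div hane hqne, Real.log_mul hcne hane]; ring

lemma term_id2 {m u v : ℝ} (hm : 0 ≤ m) (hu : m ≤ u) (hv : m ≤ v) :
    m * Real.log m - m * Real.log u - m * Real.log v = m * Real.log (m / (u * v)) := by
  rcases eq_or_lt_of_le hm with h0 | h0
  · rw [← h0]; ring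
  · have hune : u ≠ 0 := by intro h; rw [h] at hu; linarith
    have hvne : v ≠ 0 := by intro h; rw [h] at hv; linarith
    rw [Real.log_div (ne_of_gt h0) (mul_ne_zero hune hvne), Real.log_mul hune hvne]; ring

/-- Shannon lower bound, real-variable core. -/
lemma slb_core {β a b : ℝ} (hβ0 : 0 ≤ β) (hβ1 : β ≤ 1) (ha0 : 0 ≤ a) (ha1 : a ≤ 1)
    (hb0 : 0 ≤ b) (hb1 : b ≤ 1) :
    entB β - entB ((1 - β) * a + β * (1 - b)) ≤
      (1 - β) * (1 - a) * Real.log ((1 - a) / (1 - ((1 - β) * a + β * b)))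
      + (1 - β) * a * Real.log (a / ((1 - β) * a + β * b))
      + β * (1 - b) * Real.log ((1 - b) / (1 - ((1 - β) * a + β * b)))
      + β * b * Real.log (b / ((1 - β) * a + β * b)) := by
  have h1β : (0:ℝ) ≤ 1 - β := by linarith
  have h1a : (0:ℝ) ≤ 1 - a := by linarith
  have h1b : (0:ℝ) ≤ 1 - b := by linarith
  have m00 : (0:ℝ) ≤ (1-β)*(1-a) := mul_nonneg h1β h1a
  have m01 : (0:ℝ) ≤ (1-β)*a := mul_nonneg h1β ha0
  have m10 : (0:ℝ) ≤ β*(1-b) := mul_nonneg hβ0 h1b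
  have m11 : (0:ℝ) ≤ β*b := mul_nonneg hβ0 hb0
  have hq0 : (1-β)*(1-a) + β*(1-b) = 1 - ((1-β)*a + β*b) := by ring
  have he : (1-β)*(1-a) + β*b = 1 - ((1-β)*a + β*(1-b)) := by ring
  have hu00 : (1-β)*(1-a) ≤ 1 - ((1-β)*a + β*b) := by linarith [hq0]
  have hv00 : (1-β)*(1-a) ≤ 1 - ((1-β)*a + β*(1-b)) := by linarith [he]
  have hu01 : (1-β)*a ≤ (1-β)*a + β*b := by linarith
  have hv01 : (1-β)*a ≤ (1-β)*a + β*(1-b) := by linarith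
  have hu10 : β*(1-b) ≤ 1 - ((1-β)*a + β*b) := by linarith [hq0]
  have hv10 : β*(1-b) ≤ (1-β)*a + β*(1-b) := by linarith
  have hu11 : β*b ≤ (1-β)*a + β*b := by linarith
  have hv11 : β*b ≤ 1 - ((1-β)*a + β*(1-b)) := by linarith [he]
  have T00 := term_id (c := 1-β) (a := 1-a) (q := 1 - ((1-β)*a + β*b)) h1β h1a hu00
  have T01 := term_id (c := 1-β) (a := a) (q := (1-β)*a + β*b) h1β ha0 hu01
  have T10 := term_id (c := β) (a := 1-b) (q := 1 - ((1-β)*a + β*b)) hβ0 h1b hu10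
  have T11 := term_id (c := β) (a := b) (q := (1-β)*a + β*b) hβ0 hb0 hu11
  rw [T00, T01, T10, T11]
  have U00 := term_id2 (m := (1-β)*(1-a)) (u := 1 - ((1-β)*a + β*b))
    (v := 1 - ((1-β)*a + β*(1-b))) m00 hu00 hv00
  have U01 := term_id2 (m := (1-β)*a) (u := (1-β)*a + β*b)
    (v := (1-β)*a + β*(1-b)) m01 hu01 hv01
  have U10 := term_id2 (m := β*(1-b)) (u := 1 - ((1-β)*a + β*b))
    (v := (1-β)*a + β*(1-b)) m10 hu10 hv10
  have U11 := term_id2 (m := β*b) (u := (1-β)*a + β*b)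
    (v := 1 - ((1-β)*a + β*(1-b))) m11 hu11 hv11
  have L00 := ls_pt (p := (1-β)*(1-a)) (r := (1 - ((1-β)*a + β*b)) * (1 - ((1-β)*a + β*(1-b))))
    m00 (mul_nonneg (le_trans m00 hu00) (le_trans m00 hv00)) (fun hne => by
      have hm : 0 < (1-β)*(1-a) := lt_of_le_of_ne m00 (Ne.symm hne)
      exact mul_pos (lt_of_lt_of_le hm hu00) (lt_of_lt_of_le hm hv00))
  have L01 := ls_pt (p := (1-β)*a) (r := ((1-β)*a + β*b) * ((1-β)*a + β*(1-b)))
    m01 (mul_nonneg (le_trans m01 hu01) (le_trans m01 hv01)) (fun hne => by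
      have hm : 0 < (1-β)*a := lt_of_le_of_ne m01 (Ne.symm hne)
      exact mul_pos (lt_of_lt_of_le hm hu01) (lt_of_lt_of_le hm hv01))
  have L10 := ls_pt (p := β*(1-b)) (r := (1 - ((1-β)*a + β*b)) * ((1-β)*a + β*(1-b)))
    m10 (mul_nonneg (le_trans m10 hu10) (le_trans m10 hv10)) (fun hne => by
      have hm : 0 < β*(1-b) := lt_of_le_of_ne m10 (Ne.symm hne)
      exact mul_pos (lt_of_lt_of_le hm hu10) (lt_of_lt_of_le hm hv10))
  have L11 := ls_pt (p := β*b) (r := ((1-β)*a + β*b) * (1 - ((1-β)*a + β*(1-b))))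
    m11 (mul_nonneg (le_trans m11 hu11) (le_trans m11 hv11)) (fun hne => by
      have hm : 0 < β*b := lt_of_le_of_ne m11 (Ne.symm hne)
      exact mul_pos (lt_of_lt_of_le hm hu11) (lt_of_lt_of_le hm hv11))
  simp only [entB]
  rw [← sub_nonneg]
  linarith [L00, L01, L10, L11, U00, U01, U10, U11]

lemma kl2_nonneg {s r : ℝ} (hs0 : 0 ≤ s) (hs1 : s ≤ 1) (hr0 : 0 < r) (hr1 : r < 1) :
    0 ≤ (1-s) * Real.log ((1-s)/(1-r)) + s * Real.log (s/r) := by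
  have h1 := ls_pt (p := 1-s) (r := 1-r) (by linarith) (by linarith) (fun _ => by linarith)
  have h2 := ls_pt (p := s) (r := r) hs0 hr0.le (fun _ => hr0)
  linarith

/-- Golden-formula upper bound: `I(μ,Q) ≤ ∑ₓ μ(x) KL(Q(·|x) ‖ ν)` with `ν = Bern(w)`.
Here `a = Q(1|0)`, `b = Q(1|1)`. -/
lemma ub_core {β a b w : ℝ} (hβ0 : 0 ≤ β) (hβ1 : β ≤ 1) (ha0 : 0 < a) (ha1 : a < 1)
    (hb0 : 0 < b) (hb1 : b < 1) (hw0 : 0 < w) (hw1 : w < 1) :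
    (1 - β) * (1 - a) * Real.log ((1 - a) / (1 - ((1 - β) * a + β * b)))
      + (1 - β) * a * Real.log (a / ((1 - β) * a + β * b))
      + β * (1 - b) * Real.log ((1 - b) / (1 - ((1 - β) * a + β * b)))
      + β * b * Real.log (b / ((1 - β) * a + β * b))
    ≤ (1 - β) * ((1-a) * Real.log ((1-a)/(1-w)) + a * Real.log (a/w))
      + β * ((1-b) * Real.log ((1-b)/(1-w)) + b * Real.log (b/w)) := by
  have k1 : 0 ≤ (1-β)*(a - min a b) := mul_nonneg (by linarith) (by simp [min_le_left])
  have k2 : 0 ≤ β*(b - min a b) := mul_nonneg hβ0 (by simp [min_le_right])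
  have k3 : 0 ≤ (1-β)*(max a b - a) := mul_nonneg (by linarith) (by simp [le_max_left])
  have k4 : 0 ≤ β*(max a b - b) := mul_nonneg hβ0 (by simp [le_max_right])
  have hs0 : 0 < (1 - β) * a + β * b := lt_of_lt_of_le (lt_min ha0 hb0) (by nlinarith)
  have hs1 : (1 - β) * a + β * b < 1 := lt_of_le_of_lt (by nlinarith : (1-β)*a+β*b ≤ max a b)
    (max_lt ha1 hb1)
  have hs1' : 0 < 1 - ((1 - β) * a + β * b) := by linarith
  have key := kl2_nonneg (s := (1-β)*a+β*b) (r := w) hs0.le hs1.le hw0 hw1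
  rw [← sub_nonneg]
  have E : ((1 - β) * ((1-a) * Real.log ((1-a)/(1-w)) + a * Real.log (a/w))
      + β * ((1-b) * Real.log ((1-b)/(1-w)) + b * Real.log (b/w)))
      - ((1 - β) * (1 - a) * Real.log ((1 - a) / (1 - ((1 - β) * a + β * b)))
      + (1 - β) * a * Real.log (a / ((1 - β) * a + β * b))
      + β * (1 - b) * Real.log ((1 - b) / (1 - ((1 - β) * a + β * b)))
      + β * b * Real.log (b / ((1 - β) * a + β * b)))
      = (1-((1 - β) * a + β * b)) * Real.log ((1-((1 - β) * a + β * b))/(1-w))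
        + ((1 - β) * a + β * b) * Real.log (((1 - β) * a + β * b)/w) := by
    rw [Real.log_div (by linarith : (1:ℝ)-a ≠ 0) (by linarith : (1:ℝ)-w ≠ 0),
        Real.log_div (ne_of_gt ha0) (ne_of_gt hw0),
        Real.log_div (by linarith : (1:ℝ)-b ≠ 0) (by linarith : (1:ℝ)-w ≠ 0),
        Real.log_div (ne_of_gt hb0) (ne_of_gt hw0),
        Real.log_div (by linarith : (1:ℝ)-a ≠ 0) (ne_of_gt hs1'),
        Real.log_div (ne_of_gt ha0) (ne_of_gt hs0),
        Real.log_div (by linarith : (1:ℝ)-b ≠ 0) (ne_of_gt hs1'),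
        Real.log_div (ne_of_gt hb0) (ne_of_gt hs0),
        Real.log_div (ne_of_gt hs1') (by linarith : (1:ℝ)-w ≠ 0),
        Real.log_div (ne_of_gt hs0) (ne_of_gt hw0)]
    ring
  linarith [key, E.ge]

lemma g_hasDeriv (c s : ℝ) (hs0 : 0 < s) (hs1 : s < 1) :
    HasDerivAt (fun x : ℝ => Real.log (1-x) - Real.log x - c*(1/x - 1/(1-x)))
      ((c*(s^2 + (1-s)^2) - s*(1-s))/(s^2*(1-s)^2)) s := by
  have hs1' : (0:ℝ) < 1 - s := by linarith
  have d1 : HasDerivAt (fun x : ℝ => 1 - x) (-1) s := by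
    simpa using (hasDerivAt_id s).const_sub 1
  have d2 : HasDerivAt (fun x : ℝ => Real.log (1-x)) ((1-s)⁻¹ * (-1)) s :=
    (Real.hasDerivAt_log (ne_of_gt hs1')).comp s d1
  have d3 : HasDerivAt Real.log s⁻¹ s := Real.hasDerivAt_log (ne_of_gt hs0)
  have d4 : HasDerivAt (fun x : ℝ => 1/x) (-(s^2)⁻¹) s := by
    simpa [one_div] using (hasDerivAt_inv (ne_of_gt hs0))
  have d5 : HasDerivAt (fun x : ℝ => 1/(1-x)) (-((1-s)^2)⁻¹ * (-1)) s := by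
    simpa [one_div, Function.comp_def] using ((hasDerivAt_inv (ne_of_gt hs1')).comp s d1)
  have := (d2.sub d3).sub ((d4.sub d5).const_mul c)
  refine this.congr_deriv ?_
  have : (1:ℝ) - s ≠ 0 := ne_of_gt hs1'
  field_simp
  ring

lemma g_nonneg {D t c : ℝ} (hD0 : 0 < D) (hDt : D < t) (ht : t ≤ 1/2)
    (hc : c = D*(1-D)*(Real.log (1-D) - Real.log D)/(1-2*D)) :
    0 ≤ Real.log (1-t) - Real.log t - c*(1/t - 1/(1-t)) := by
  have hD2 : D < 1/2 := lt_of_lt_of_le hDt ht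
  have h2D : (0:ℝ) < 1 - 2*D := by linarith
  have hc0 : 0 ≤ c := by
    rw [hc]
    have := Real.log_le_log hD0 (by linarith : D ≤ 1 - D)
    apply div_nonneg _ h2D.le
    apply mul_nonneg (by nlinarith) (by linarith)
  set g : ℝ → ℝ := fun x => Real.log (1-x) - Real.log x - c*(1/x - 1/(1-x)) with hg
  have hgD : g D = 0 := by
    have h1D : (0:ℝ) < 1 - D := by linarith
    have : (1:ℝ) - D*2 ≠ 0 := by linarith
    simp only [hg, hc]
    field_simp
    ring
  have hghalf : g (1/2) = 0 := by
    simp only [hg]; norm_num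
  have hψmono : ∀ x y : ℝ, x ≤ y → y ≤ 1/2 →
      c*(y^2+(1-y)^2) - y*(1-y) ≤ c*(x^2+(1-x)^2) - x*(1-x) := by
    intro x y h1 h2
    nlinarith [mul_nonneg (mul_nonneg (by linarith : (0:ℝ) ≤ 2*c+1)
      (by linarith : (0:ℝ) ≤ y - x)) (by linarith : (0:ℝ) ≤ 1 - x - y)]
  by_cases hψt : 0 ≤ c*(t^2+(1-t)^2) - t*(1-t)
  · have hmono : MonotoneOn g (Set.Icc D t) := by
      apply monotoneOn_of_deriv_nonneg (convex_Icc D t)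
      · intro x hx
        exact (g_hasDeriv c x (by linarith [hx.1] : 0 < x)
          (by linarith [hx.2] : x < 1)).continuousAt.continuousWithinAt
      · intro x hx
        rw [interior_Icc] at hx
        exact (g_hasDeriv c x (by linarith [hx.1] : 0 < x)
          (by linarith [hx.2] : x < 1)).differentiableAt.differentiableWithinAt
      · intro x hx
        rw [interior_Icc] at hx
        rw [(g_hasDeriv c x (by linarith [hx.1] : 0 < x) (by linarith [hx.2] : x < 1)).deriv]
        apply div_nonneg _ (by nlinarith [hx.1, hx.2] : (0:ℝ) ≤ x^2*(1-x)^2)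
        have := hψmono x t hx.2.le ht
        linarith
    have := hmono (Set.left_mem_Icc.2 hDt.le) (Set.right_mem_Icc.2 hDt.le) hDt.le
    rw [hgD] at this
    exact this
  · push_neg at hψt
    have hanti : AntitoneOn g (Set.Icc t (1/2)) := by
      apply antitoneOn_of_deriv_nonpos (convex_Icc t (1/2))
      · intro x hx
        exact (g_hasDeriv c x (by linarith [hx.1] : 0 < x)
          (by linarith [hx.2] : x < 1)).continuousAt.continuousWithinAt
      · intro x hx
        rw [interior_Icc] at hx
        exact (g_hasDeriv c x (by linarith [hx.1] : 0 < x)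
          (by linarith [hx.2] : x < 1)).differentiableAt.differentiableWithinAt
      · intro x hx
        rw [interior_Icc] at hx
        rw [(g_hasDeriv c x (by linarith [hx.1] : 0 < x) (by linarith [hx.2] : x < 1)).deriv]
        rw [div_nonpos_iff]
        right
        refine ⟨?_, by nlinarith [hx.1, hx.2]⟩
        have := hψmono t x hx.1.le hx.2.le
        linarith
    have := hanti (Set.left_mem_Icc.2 ht) (Set.right_mem_Icc.2 ht) ht
    rw [hghalf] at this
    exact this

section Kfacts
variable {D t q a b : ℝ}

lemma chan_facts (hD0 : 0 < D) (hDt : D < t) (ht : t ≤ 1/2)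
    (hq : q = (t - D)/(1 - 2*D)) (ha : a = q*D/(1-t)) (hb : b = q*(1-D)/t) :
    0 < q ∧ q ≤ 1/2 ∧ 0 < a ∧ a < 1 ∧ 0 < b ∧ b < 1 ∧ q < 1 := by
  have hD2 : D < 1/2 := lt_of_lt_of_le hDt ht
  have h2D : (0:ℝ) < 1 - 2*D := by linarith
  have ht0 : 0 < t := lt_trans hD0 hDt
  have ht1 : t < 1 := by linarith
  have hq0 : 0 < q := by rw [hq]; exact div_pos (by linarith) h2D
  have hq2 : q ≤ 1/2 := by rw [hq, div_le_iff₀ h2D]; linarith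
  have ha0 : 0 < a := by rw [ha]; exact div_pos (mul_pos hq0 hD0) (by linarith)
  have ha1 : a < 1 := by
    rw [ha, div_lt_one (by linarith : (0:ℝ) < 1-t)]; nlinarith
  have hb0 : 0 < b := by rw [hb]; exact div_pos (mul_pos hq0 (by linarith)) ht0
  have hb1 : b < 1 := by
    rw [hb, div_lt_one ht0, hq, div_mul_eq_mul_div, div_lt_iff₀ h2D]; nlinarith
  exact ⟨hq0, hq2, ha0, ha1, hb0, hb1, by linarith⟩

lemma ratio_facts (hD0 : 0 < D) (hDt : D < t) (ht : t ≤ 1/2)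
    (hq : q = (t - D)/(1 - 2*D)) (ha : a = q*D/(1-t)) (hb : b = q*(1-D)/t) :
    a/q = D/(1-t) ∧ (1-a)/(1-q) = (1-D)/(1-t) ∧ b/q = (1-D)/t ∧ (1-b)/(1-q) = D/t := by
  obtain ⟨hq0, hq2, ha0, ha1, hb0, hb1, hq1⟩ := chan_facts hD0 hDt ht hq ha hb
  have hD2 : D < 1/2 := lt_of_lt_of_le hDt ht
  have h2D : (0:ℝ) < 1 - 2*D := by linarith
  have ht0 : 0 < t := lt_trans hD0 hDt
  have ht1 : (0:ℝ) < 1 - t := by linarith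
  have hq1' : (0:ℝ) < 1 - q := by linarith
  have hrel : q*(1-2*D) = t - D := by rw [hq]; exact div_mul_cancel₀ _ h2D.ne'
  refine ⟨?_, ?_, ?_, ?_⟩
  · rw [ha]; field_simp
  · rw [ha, div_eq_div_iff (by linarith : (1:ℝ)-q ≠ 0) (by linarith : (1:ℝ)-t ≠ 0)]
    have expand : (1 - q*D/(1-t))*(1-t) = (1-t) - q*D := by field_simp
    rw [expand]; linear_combination hrel
  · rw [hb]; field_simp
  · rw [hb, div_eq_div_iff (by linarith : (1:ℝ)-q ≠ 0) (ne_of_gt ht0)]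
    have expand : (1 - q*(1-D)/t)*t = t - q*(1-D) := by field_simp
    rw [expand]; linear_combination -hrel

lemma K_le (hD0 : 0 < D) (hDt : D < t) (ht : t ≤ 1/2)
    (hq : q = (t - D)/(1 - 2*D)) (ha : a = q*D/(1-t)) (hb : b = q*(1-D)/t) :
    (1-a) * Real.log ((1-a)/(1-q)) + a * Real.log (a/q)
      ≤ (1-b) * Real.log ((1-b)/(1-q)) + b * Real.log (b/q) := by
  obtain ⟨hq0, hq2, ha0, ha1, hb0, hb1, hq1⟩ := chan_facts hD0 hDt ht hq ha hb
  obtain ⟨r1, r2, r3, r4⟩ := ratio_facts hD0 hDt ht hq ha hb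
  have hD2 : D < 1/2 := lt_of_lt_of_le hDt ht
  have h2D : (0:ℝ) < 1 - 2*D := by linarith
  have ht0 : 0 < t := lt_trans hD0 hDt
  have ht1 : (0:ℝ) < 1 - t := by linarith
  have : (1:ℝ) - D*2 ≠ 0 := by linarith
  have hg := g_nonneg hD0 hDt ht (c := D*(1-D)*(Real.log (1-D) - Real.log D)/(1-2*D)) rfl
  have cid : a + b - 1 = -(D*(1-D)/(1-2*D))*(1/t - 1/(1-t)) := by
    rw [ha, hb, hq]; field_simp; ring
  rw [← sub_nonneg]
  have E : ((1-b) * Real.log ((1-b)/(1-q)) + b * Real.log (b/q))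
      - ((1-a) * Real.log ((1-a)/(1-q)) + a * Real.log (a/q))
      = Real.log (1-t) - Real.log t
        - (D*(1-D)*(Real.log (1-D) - Real.log D)/(1-2*D))*(1/t - 1/(1-t)) := by
    rw [r1, r2, r3, r4,
      Real.log_div (by linarith : (1:ℝ)-D ≠ 0) (ne_of_gt ht0),
      Real.log_div (ne_of_gt hD0) (ne_of_gt ht0),
      Real.log_div (ne_of_gt hD0) (ne_of_gt ht1),
      Real.log_div (by linarith : (1:ℝ)-D ≠ 0) (ne_of_gt ht1)]
    linear_combination (Real.log (1-D) - Real.log D) * cid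
  linarith [hg, E.ge]

lemma K_eq_half (hD0 : 0 < D) (hDt : D < t) (hthalf : t = 1/2)
    (hq : q = (t - D)/(1 - 2*D)) (ha : a = q*D/(1-t)) (hb : b = q*(1-D)/t) :
    (1-a) * Real.log ((1-a)/(1-q)) + a * Real.log (a/q)
      = (1-b) * Real.log ((1-b)/(1-q)) + b * Real.log (b/q) := by
  subst hthalf
  have hD2 : D < 1/2 := hDt
  have h2D : (0:ℝ) < 1 - 2*D := by linarith
  have hq' : q = 1/2 := by rw [hq]; field_simp
  have ha' : a = D := by rw [ha, hq']; norm_num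
  have hb' : b = 1 - D := by rw [hb, hq']; norm_num
  rw [ha', hb', hq']
  norm_num
  ring

lemma F_id (hD0 : 0 < D) (hDt : D < t) (ht : t ≤ 1/2)
    (hq : q = (t - D)/(1 - 2*D)) (ha : a = q*D/(1-t)) (hb : b = q*(1-D)/t) :
    (1-t)*((1-a) * Real.log ((1-a)/(1-q)) + a * Real.log (a/q))
      + t*((1-b) * Real.log ((1-b)/(1-q)) + b * Real.log (b/q))
      = entB t - entB D := by
  obtain ⟨r1, r2, r3, r4⟩ := ratio_facts hD0 hDt ht hq ha hb
  have hD2 : D < 1/2 := lt_of_lt_of_le hDt ht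
  have h2D : (0:ℝ) < 1 - 2*D := by linarith
  have ht0 : 0 < t := lt_trans hD0 hDt
  have ht1 : (0:ℝ) < 1 - t := by linarith
  have : (1:ℝ) - D*2 ≠ 0 := by linarith
  have c1 : (1-t)*a + t*(1-b) = D := by rw [ha, hb, hq]; field_simp; ring
  have c2 : (1-t)*(1-a) + t*b = 1 - D := by rw [ha, hb, hq]; field_simp; ring
  rw [r1, r2, r3, r4,
    Real.log_div (by linarith : (1:ℝ)-D ≠ 0) (ne_of_gt ht0),
    Real.log_div (ne_of_gt hD0) (ne_of_gt ht0),
    Real.log_div (ne_of_gt hD0) (ne_of_gt ht1),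
    Real.log_div (by linarith : (1:ℝ)-D ≠ 0) (ne_of_gt ht1)]
  simp only [entB]
  linear_combination Real.log D * c1 + Real.log (1-D) * c2

end Kfacts

lemma entB_eq (x : ℝ) : entB x = Real.binEntropy x := by
  unfold entB Real.binEntropy
  rw [Real.log_inv, Real.log_inv]; ring

lemma entB_half : entB (1/2) = Real.log 2 := by
  rw [entB_eq, show (1/2:ℝ) = 2⁻¹ by norm_num, Real.binEntropy_two_inv]

lemma entB_mono {x y : ℝ} (hx : 0 ≤ x) (hxy : x ≤ y) (hy : y ≤ 1/2) : entB x ≤ entB y := by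
  rw [entB_eq, entB_eq]
  rcases eq_or_lt_of_le hxy with h | h
  · rw [h]
  · exact (Real.binEntropy_strictMonoOn ⟨hx, by norm_num; linarith⟩
      ⟨by linarith, by norm_num; linarith⟩ h).le

lemma entB_lt_log2 {x : ℝ} (h0 : 0 ≤ x) (h1 : x ≤ 1) (hne : x ≠ 1/2) : entB x < Real.log 2 := by
  rcases le_or_gt x (1/2) with h | h
  · have hlt : x < 1/2 := lt_of_le_of_ne h hne
    rw [entB_eq, ← Real.binEntropy_two_inv]
    exact Real.binEntropy_strictMonoOn ⟨h0, by norm_num; linarith⟩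
      ⟨by norm_num, le_refl _⟩ (by norm_num; linarith)
  · have : entB x = Real.binEntropy (1 - x) := by
      rw [entB_eq, Real.binEntropy_one_sub]
    rw [this, ← Real.binEntropy_two_inv]
    exact Real.binEntropy_strictMonoOn ⟨by linarith, by norm_num; linarith⟩
      ⟨by norm_num, le_refl _⟩ (by norm_num; linarith)

/-- The binary KL divergence `d(x‖β₀)` as a function of `x`. -/
noncomputable def klf (β₀ : ℝ) : ℝ → ℝ :=
  fun x => (1-x)*Real.log ((1-x)/(1-β₀)) + x*Real.log (x/β₀)

lemma klf_mono {β₀ : ℝ} (hβ₀ : 0 < β₀) (hβ₀1 : β₀ < 1) : MonotoneOn (klf β₀) (Set.Icc β₀ 1) := by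
  set G : ℝ → ℝ := fun x => ((1-x)*Real.log (1-x) - (1-x)*Real.log (1-β₀))
    + (x*Real.log x - x*Real.log β₀) with hG
  have hEq : Set.EqOn G (klf β₀) (Set.Icc β₀ 1) := by
    intro x hx
    have hx0 : 0 < x := lt_of_lt_of_le hβ₀ hx.1
    rcases lt_or_eq_of_le hx.2 with h1 | h1
    · rw [hG, klf]
      rw [Real.log_div (by linarith : (1:ℝ)-x ≠ 0) (by linarith : (1:ℝ)-β₀ ≠ 0),
        Real.log_div (ne_of_gt hx0) (ne_of_gt hβ₀)]
      ring
    · subst h1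
      simp [hG, klf, one_div, Real.log_inv]
  apply MonotoneOn.congr _ hEq
  apply monotoneOn_of_deriv_nonneg (convex_Icc β₀ 1)
  · apply ContinuousOn.add
    · apply ContinuousOn.sub
      · exact (Real.continuous_mul_log.comp (continuous_const.sub continuous_id)).continuousOn
      · exact ((continuous_const.sub continuous_id).mul continuous_const).continuousOn
    · apply ContinuousOn.sub
      · exact Real.continuous_mul_log.continuousOn
      · exact (continuous_id.mul continuous_const).continuousOn
  · intro x hx
    rw [interior_Icc] at hx
    have hx0 : 0 < x := lt_of_lt_of_le hβ₀ hx.1.le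
    have hx1 : x < 1 := hx.2
    have d1 : HasDerivAt (fun y : ℝ => 1 - y) (-1) x := by
      simpa using (hasDerivAt_id x).const_sub 1
    have d2 : HasDerivAt (fun y : ℝ => (1-y)*Real.log (1-y)) ((Real.log (1-x) + 1) * (-1)) x :=
      (Real.hasDerivAt_mul_log (by linarith : (1:ℝ)-x ≠ 0)).comp x d1
    have d3 : HasDerivAt (fun y : ℝ => (1-y)*Real.log (1-β₀)) ((-1) * Real.log (1-β₀)) x :=
      d1.mul_const _
    have d4 : HasDerivAt (fun y : ℝ => y*Real.log y) (Real.log x + 1) x :=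
      Real.hasDerivAt_mul_log (ne_of_gt hx0)
    have d5 : HasDerivAt (fun y : ℝ => y*Real.log β₀) (1 * Real.log β₀) x :=
      (hasDerivAt_id x).mul_const _
    exact (((d2.sub d3).add (d4.sub d5))).differentiableAt.differentiableWithinAt
  · intro x hx
    rw [interior_Icc] at hx
    have hx0 : 0 < x := lt_of_lt_of_le hβ₀ hx.1.le
    have hx1 : x < 1 := hx.2
    have d1 : HasDerivAt (fun y : ℝ => 1 - y) (-1) x := by
      simpa using (hasDerivAt_id x).const_sub 1
    have d2 : HasDerivAt (fun y : ℝ => (1-y)*Real.log (1-y)) ((Real.log (1-x) + 1) * (-1)) x :=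
      (Real.hasDerivAt_mul_log (by linarith : (1:ℝ)-x ≠ 0)).comp x d1
    have d3 : HasDerivAt (fun y : ℝ => (1-y)*Real.log (1-β₀)) ((-1) * Real.log (1-β₀)) x :=
      d1.mul_const _
    have d4 : HasDerivAt (fun y : ℝ => y*Real.log y) (Real.log x + 1) x :=
      Real.hasDerivAt_mul_log (ne_of_gt hx0)
    have d5 : HasDerivAt (fun y : ℝ => y*Real.log β₀) (1 * Real.log β₀) x :=
      (hasDerivAt_id x).mul_const _
    have hDer : HasDerivAt G (((Real.log (1-x) + 1) * (-1) - (-1) * Real.log (1-β₀))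
        + ((Real.log x + 1) - 1 * Real.log β₀)) x := (d2.sub d3).add (d4.sub d5)
    rw [hDer.deriv]
    have l1 : Real.log β₀ ≤ Real.log x := Real.log_le_log hβ₀ hx.1.le
    have l2 : Real.log (1-x) ≤ Real.log (1-β₀) :=
      Real.log_le_log (by linarith) (by linarith [hx.1])
    linarith

/-! ### PMF `Bool` basics -/

lemma pmf_bool_ne_top (μ : PMF Bool) (b : Bool) : μ b ≠ ⊤ :=
  ne_top_of_le_ne_top ENNReal.one_ne_top (μ.coe_le_one b)

lemma pmf_false_toReal (μ : PMF Bool) : (μ false).toReal = 1 - (μ true).toReal := by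
  have h := μ.tsum_coe
  rw [tsum_bool] at h
  have : (μ false).toReal + (μ true).toReal = 1 := by
    rw [← ENNReal.toReal_add (pmf_bool_ne_top μ false) (pmf_bool_ne_top μ true), h]; simp
  linarith

lemma pmf_toReal_nonneg (μ : PMF Bool) (b : Bool) : 0 ≤ (μ b).toReal := ENNReal.toReal_nonneg

lemma pmf_toReal_le_one (μ : PMF Bool) (b : Bool) : (μ b).toReal ≤ 1 := by
  simpa using ENNReal.toReal_mono ENNReal.one_ne_top (μ.coe_le_one b)

/-- Bernoulli pmf from a real parameter. -/
noncomputable def bern (p : ℝ) (h0 : 0 ≤ p) (h1 : p ≤ 1) : PMF Bool :=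
  PMF.bernoulli (Real.toNNReal p) (by
    rw [← Real.toNNReal_one]; exact Real.toNNReal_le_toNNReal h1)

@[simp] lemma bern_true_toReal (p : ℝ) (h0 : 0 ≤ p) (h1 : p ≤ 1) :
    ((bern p h0 h1) true).toReal = p := by
  have h : (bern p h0 h1) true = ENNReal.ofReal p := by
    simp [bern, PMF.bernoulli_apply]; rfl
  rw [h]; exact ENNReal.toReal_ofReal h0

@[simp] lemma bern_false_toReal (p : ℝ) (h0 : 0 ≤ p) (h1 : p ≤ 1) :
    ((bern p h0 h1) false).toReal = 1 - p := by
  rw [pmf_false_toReal, bern_true_toReal]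

lemma tsum_bool_prod (f : Bool × Bool → ℝ) :
    ∑' p : Bool × Bool, f p
      = f (false,false) + f (false,true) + f (true,false) + f (true,true) := by
  rw [tsum_eq_sum (s := Finset.univ) (by simp)]
  rw [show (Finset.univ : Finset (Bool × Bool))
      = {(false,false),(false,true),(true,false),(true,true)} by decide]
  simp [Finset.sum_insert, Finset.mem_insert]
  ring

lemma bind_true_toReal (μ : PMF Bool) (Q : Bool → PMF Bool) :
    ((μ.bind Q) true).toReal
      = (1 - (μ true).toReal) * (Q false true).toReal
        + (μ true).toReal * (Q true true).toReal := by
  rw [PMF.bind_apply, tsum_bool, ENNReal.toReal_add, ENNReal.toReal_mul, ENNReal.toReal_mul,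
    pmf_false_toReal]
  · exact ENNReal.mul_ne_top (pmf_bool_ne_top _ _) (pmf_bool_ne_top _ _)
  · exact ENNReal.mul_ne_top (pmf_bool_ne_top _ _) (pmf_bool_ne_top _ _)

lemma bind_false_toReal (μ : PMF Bool) (Q : Bool → PMF Bool) :
    ((μ.bind Q) false).toReal
      = 1 - ((1 - (μ true).toReal) * (Q false true).toReal
        + (μ true).toReal * (Q true true).toReal) := by
  rw [pmf_false_toReal (μ.bind Q), bind_true_toReal]

lemma klDivB_expand (μ ν : PMF Bool) :
    klDivB μ ν = (1 - (μ true).toReal) * Real.log ((1 - (μ true).toReal)/(1 - (ν true).toReal))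
      + (μ true).toReal * Real.log ((μ true).toReal/(ν true).toReal) := by
  rw [klDivB, tsum_bool, pmf_false_toReal μ, pmf_false_toReal ν]

lemma hamDistortion_expand (μ : PMF Bool) (Q : Bool → PMF Bool) :
    hamDistortion μ Q
      = (1 - (μ true).toReal) * (Q false true).toReal
        + (μ true).toReal * (Q true false).toReal := by
  rw [hamDistortion, tsum_bool_prod]
  simp [ENNReal.toReal_mul, pmf_false_toReal μ]

lemma mutInfoB_expand (μ : PMF Bool) (Q : Bool → PMF Bool) :
    mutInfoB μ Q =
      (1 - (μ true).toReal) * (1 - (Q false true).toReal) *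
        Real.log ((1 - (Q false true).toReal) /
          (1 - ((1 - (μ true).toReal) * (Q false true).toReal
            + (μ true).toReal * (Q true true).toReal)))
      + (1 - (μ true).toReal) * (Q false true).toReal *
        Real.log ((Q false true).toReal /
          ((1 - (μ true).toReal) * (Q false true).toReal
            + (μ true).toReal * (Q true true).toReal))
      + (μ true).toReal * (1 - (Q true true).toReal) *
        Real.log ((1 - (Q true true).toReal) /
          (1 - ((1 - (μ true).toReal) * (Q false true).toReal
            + (μ true).toReal * (Q true true).toReal)))
      + (μ true).toReal * (Q true true).toReal *
        Real.log ((Q true true).toReal /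
          ((1 - (μ true).toReal) * (Q false true).toReal
            + (μ true).toReal * (Q true true).toReal)) := by
  rw [mutInfoB, tsum_bool_prod]
  simp only [ENNReal.toReal_mul, bind_true_toReal, bind_false_toReal,
    pmf_false_toReal μ, pmf_false_toReal (Q false), pmf_false_toReal (Q true)]

end Aux
set_option maxHeartbeats 1600000 in
/-- **Robust rate–distortion function of Bernoulli sources under Hamming distortion.**
Let `μ₀ = Bern(β₀)` with `β₀ ∈ (0, 1/2]`, `Γ ≥ 0`, and let `β*` be the maximizer of the
binary entropy over the Bernoulli parameters of the KL-sphere `𝒮(Γ)`. Then for every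
`0 < D < β*`, `R⁻(D) = h_b(β*) - h_b(D)`. -/
theorem robust_rdf_bernoulli
    (β₀ Γ βstar D : ℝ)
    (hβ₀pos : 0 < β₀) (hβ₀half : β₀ ≤ 1 / 2) (hΓ : 0 ≤ Γ)
    (μ₀ : PMF Bool) (hμ₀ : μ₀ true = ENNReal.ofReal β₀)
    (hβstar_mem : ∃ μ ∈ sphereB μ₀ Γ, (μ true).toReal = βstar)
    (hβstar_max : ∀ μ ∈ sphereB μ₀ Γ, entB (μ true).toReal ≤ entB βstar)
    (hD : 0 < D) (hDβ : D < βstar) :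
    RminusB μ₀ Γ D = entB βstar - entB D := by
  classical
  have hβ₀1 : β₀ < 1 := by linarith
  have hμ₀t : (μ₀ true).toReal = β₀ := by rw [hμ₀, ENNReal.toReal_ofReal hβ₀pos.le]
  have hkl : ∀ μ : PMF Bool, klDivB μ μ₀ = klf β₀ (μ true).toReal := by
    intro μ; rw [klDivB_expand, hμ₀t, klf]
  obtain ⟨μs, hμs_mem, hμs_t⟩ := hβstar_mem
  have hts0 : 0 < βstar := lt_trans hD hDβ
  have hts1 : βstar ≤ 1 := by rw [← hμs_t]; exact pmf_toReal_le_one μs true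
  -- if the sphere contains a parameter ≥ 1/2 then it contains Bern(1/2)
  have half_mem : ∀ μ ∈ sphereB μ₀ Γ, 1/2 ≤ (μ true).toReal →
      (bern (1/2) (by norm_num) (by norm_num)) ∈ sphereB μ₀ Γ := by
    intro μ hμ hhalf
    have h1 : (μ true).toReal ≤ 1 := pmf_toReal_le_one μ true
    have hmono : klf β₀ (1/2) ≤ klf β₀ (μ true).toReal :=
      klf_mono hβ₀pos hβ₀1 ⟨hβ₀half, by norm_num⟩ ⟨le_trans hβ₀half hhalf, h1⟩ hhalf
    simp only [sphereB, Set.mem_setOf_eq] at hμ ⊢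
    rw [hkl, bern_true_toReal]
    rw [hkl] at hμ
    linarith
  -- βstar ≤ 1/2
  have ht_half : βstar ≤ 1/2 := by
    by_contra hcon
    push_neg at hcon
    have hb := half_mem μs hμs_mem (by rw [hμs_t]; linarith)
    have h2 := hβstar_max _ hb
    rw [bern_true_toReal, entB_half] at h2
    have := entB_lt_log2 hts0.le hts1 (ne_of_gt hcon)
    linarith
  -- every sphere parameter is ≤ βstar, unless βstar = 1/2
  have hA2 : ∀ μ ∈ sphereB μ₀ Γ, (μ true).toReal ≤ βstar ∨ βstar = 1/2 := by
    intro μ hμ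
    by_cases hle : (μ true).toReal ≤ βstar
    · exact Or.inl hle
    push_neg at hle
    right
    by_cases hb2 : (μ true).toReal ≤ 1/2
    · exfalso
      have hstrict : entB βstar < entB (μ true).toReal := by
        rw [entB_eq, entB_eq]
        exact Real.binEntropy_strictMonoOn ⟨hts0.le, by norm_num; linarith⟩
          ⟨pmf_toReal_nonneg μ true, by norm_num; linarith⟩ hle
      exact absurd (hβstar_max μ hμ) (not_le.2 hstrict)
    · push_neg at hb2
      have hb := half_mem μ hμ hb2.le
      have h2 := hβstar_max _ hb
      rw [bern_true_toReal, entB_half] at h2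
      by_contra hne
      exact absurd h2 (not_le.2 (entB_lt_log2 hts0.le hts1 hne))
  -- channel parameters
  have hD2 : D < 1/2 := lt_of_lt_of_le hDβ ht_half
  obtain ⟨hq0, hq2, ha0, ha1, hb0, hb1, hq1v⟩ :=
    chan_facts hD hDβ ht_half (q := (βstar - D)/(1-2*D)) (a := ((βstar - D)/(1-2*D))*D/(1-βstar))
      (b := ((βstar - D)/(1-2*D))*(1-D)/βstar) rfl rfl rfl
  set qv : ℝ := (βstar - D)/(1-2*D) with hqv
  set av : ℝ := qv*D/(1-βstar) with hav
  set bv : ℝ := qv*(1-D)/βstar with hbv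
  have h1tne : (1:ℝ) - βstar ≠ 0 := by linarith
  have htsne : βstar ≠ 0 := ne_of_gt hts0
  have h2Dne : (1:ℝ) - 2*D ≠ 0 := by linarith
  -- the optimal test channel
  obtain ⟨Qs, hQsf, hQst⟩ : ∃ Q : Bool → PMF Bool,
      Q false = bern av ha0.le ha1.le ∧ Q true = bern bv hb0.le hb1.le :=
    ⟨fun x => Bool.rec (bern av ha0.le ha1.le) (bern bv hb0.le hb1.le) x, rfl, rfl⟩
  have vft : (Qs false true).toReal = av := by rw [hQsf]; exact bern_true_toReal _ _ _
  have vtt : (Qs true true).toReal = bv := by rw [hQst]; exact bern_true_toReal _ _ _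
  have vtf : (Qs true false).toReal = 1 - bv := by rw [hQst]; exact bern_false_toReal _ _ _
  -- slope of the distortion in β
  have e1 : av*(1-βstar) = qv*D := by
    rw [hav]; field_simp
  have e2 : (1-bv)*βstar = (1-qv)*D := by
    have hrel : qv*(1-2*D) = βstar - D := by rw [hqv]; exact div_mul_cancel₀ _ h2Dne
    have expand : (1 - qv*(1-D)/βstar)*βstar = βstar - qv*(1-D) := by
      field_simp
    rw [hbv, expand]; linear_combination -hrel
  have hsl : ((1-bv) - av)*(βstar*(1-βstar)) = D*(1 - βstar - qv) := by
    linear_combination (1-βstar)*e2 - βstar*e1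
  have hslope : 0 ≤ (1-bv) - av := by
    nlinarith [hsl, mul_pos hts0 (show (0:ℝ) < 1 - βstar by linarith)]
  have hc1 : (1-βstar)*av + βstar*(1-bv) = D := by
    nlinarith [e1, e2]
  -- feasibility of the channel
  have hQs_mem : Qs ∈ hamKernelSet μ₀ Γ D := by
    intro μ hμ
    rw [hamDistortion_expand, vft, vtf]
    have hβ0 : 0 ≤ (μ true).toReal := pmf_toReal_nonneg μ true
    have hβ1 : (μ true).toReal ≤ 1 := pmf_toReal_le_one μ true
    rcases hA2 μ hμ with hle | hhalf
    · nlinarith [hc1, mul_nonneg (show (0:ℝ) ≤ βstar - (μ true).toReal by linarith) hslope]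
    · have hq12 : qv = 1/2 := by rw [hqv, hhalf]; rw [div_eq_iff h2Dne]; ring
      have hav' : av = D := by rw [hav, hq12, hhalf]; norm_num
      have hbv' : bv = 1 - D := by rw [hbv, hq12, hhalf]; norm_num
      rw [hav', hbv']
      have : (1 - (μ true).toReal)*D + (μ true).toReal*(1-(1-D)) = D := by ring
      linarith
  -- achievability: the channel certifies the upper bound for every sphere source
  have hach : ∀ μ ∈ sphereB μ₀ Γ, mutInfoB μ Qs ≤ entB βstar - entB D := by
    intro μ hμ
    have hβ0 : 0 ≤ (μ true).toReal := pmf_toReal_nonneg μ true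
    have hβ1 : (μ true).toReal ≤ 1 := pmf_toReal_le_one μ true
    rw [mutInfoB_expand, vft, vtt]
    have hub := ub_core (β := (μ true).toReal) (a := av) (b := bv) (w := qv)
      hβ0 hβ1 ha0 ha1 hb0 hb1 hq0 (by linarith : qv < 1)
    have hF := F_id hD hDβ ht_half (q := qv) (a := av) (b := bv) hqv hav hbv
    rcases hA2 μ hμ with hle | hhalf
    · have hK := K_le hD hDβ ht_half (q := qv) (a := av) (b := bv) hqv hav hbv
      have hprod : 0 ≤ (βstar - (μ true).toReal) *
          (((1-bv) * Real.log ((1-bv)/(1-qv)) + bv * Real.log (bv/qv))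
            - ((1-av) * Real.log ((1-av)/(1-qv)) + av * Real.log (av/qv))) :=
        mul_nonneg (by linarith) (by linarith)
      linarith [hub, hF, hprod]
    · have hKeq := K_eq_half hD hDβ hhalf (q := qv) (a := av) (b := bv) hqv hav hbv
      have hz : ((1-bv) * Real.log ((1-bv)/(1-qv)) + bv * Real.log (bv/qv))
          - ((1-av) * Real.log ((1-av)/(1-qv)) + av * Real.log (av/qv)) = 0 := by
        linarith [hKeq]
      have hprod : ((μ true).toReal - βstar) *
          (((1-bv) * Real.log ((1-bv)/(1-qv)) + bv * Real.log (bv/qv))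
            - ((1-av) * Real.log ((1-av)/(1-qv)) + av * Real.log (av/qv))) = 0 :=
        mul_eq_zero_of_right _ hz
      linarith [hub, hF, hprod]
  -- converse: Shannon lower bound for every sphere source and feasible kernel
  have hconv : ∀ μ ∈ sphereB μ₀ Γ, ∀ Q ∈ hamKernelSet μ₀ Γ D,
      entB (μ true).toReal - entB D ≤ mutInfoB μ Q := by
    intro μ hμ Q hQ
    have hβ0 : 0 ≤ (μ true).toReal := pmf_toReal_nonneg μ true
    have hβ1 : (μ true).toReal ≤ 1 := pmf_toReal_le_one μ true
    have ha0' : 0 ≤ (Q false true).toReal := pmf_toReal_nonneg _ _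
    have ha1' : (Q false true).toReal ≤ 1 := pmf_toReal_le_one _ _
    have hb0' : 0 ≤ (Q true true).toReal := pmf_toReal_nonneg _ _
    have hb1' : (Q true true).toReal ≤ 1 := pmf_toReal_le_one _ _
    have hdist := hQ μ hμ
    rw [hamDistortion_expand, pmf_false_toReal (Q true)] at hdist
    have hslb := slb_core (β := (μ true).toReal) (a := (Q false true).toReal)
      (b := (Q true true).toReal) hβ0 hβ1 ha0' ha1' hb0' hb1'
    rw [← mutInfoB_expand] at hslb
    have hd0 : 0 ≤ (1 - (μ true).toReal) * (Q false true).toReal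
        + (μ true).toReal * (1 - (Q true true).toReal) := by
      have := mul_nonneg (show (0:ℝ) ≤ 1 - (μ true).toReal by linarith) ha0'
      have := mul_nonneg hβ0 (show (0:ℝ) ≤ 1 - (Q true true).toReal by linarith)
      linarith
    have hmon : entB ((1 - (μ true).toReal) * (Q false true).toReal
        + (μ true).toReal * (1 - (Q true true).toReal)) ≤ entB D :=
      entB_mono hd0 hdist hD2.le
    linarith
  -- assemble the sup-inf
  have hinner_ne : ∀ μ : PMF Bool,
      {v | ∃ Q ∈ hamKernelSet μ₀ Γ D, v = mutInfoB μ Q}.Nonempty :=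
    fun μ => ⟨mutInfoB μ Qs, Qs, hQs_mem, rfl⟩
  have hinner_bdd : ∀ μ ∈ sphereB μ₀ Γ,
      BddBelow {v | ∃ Q ∈ hamKernelSet μ₀ Γ D, v = mutInfoB μ Q} := by
    intro μ hμ
    refine ⟨entB (μ true).toReal - entB D, ?_⟩
    rintro v ⟨Q, hQ, rfl⟩
    exact hconv μ hμ Q hQ
  have hub_all : ∀ r ∈ {r | ∃ μ ∈ sphereB μ₀ Γ,
      r = sInf {v | ∃ Q ∈ hamKernelSet μ₀ Γ D, v = mutInfoB μ Q}},
      r ≤ entB βstar - entB D := by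
    rintro r ⟨μ, hμ, rfl⟩
    exact le_trans (csInf_le (hinner_bdd μ hμ) ⟨Qs, hQs_mem, rfl⟩) (hach μ hμ)
  have hge : entB βstar - entB D
      ≤ sInf {v | ∃ Q ∈ hamKernelSet μ₀ Γ D, v = mutInfoB μs Q} := by
    apply le_csInf (hinner_ne μs)
    rintro v ⟨Q, hQ, rfl⟩
    have := hconv μs hμs_mem Q hQ
    rw [hμs_t] at this
    exact this
  rw [RminusB]
  apply le_antisymm
  · exact csSup_le ⟨_, μs, hμs_mem, rfl⟩ hub_all
  · exact le_trans hge (le_csSup ⟨_, hub_all⟩ ⟨μs, hμs_mem, rfl⟩)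
end

section
/- Let β_0 ∈ (0,1) and λ > 0. Then the function φ(β) = h_b(β) − λ·d(β‖β_0) on (0,1) attains its maximum at the unique point β* ∈ (0,1) satisfying (1−β*)/β* = ((1−β_0)/β_0)^{λ/(1+λ)}, i.e., β* = ( 1 + ((1−β_0)/β_0)^{λ/(1+λ)} )^{−1}; that is, φ(β) ≤ φ(β*) for all β ∈ (0,1), with equality only for β = β*. -/
/-- Binary Kullback–Leibler divergence (natural logarithm). -/
noncomputable def klB (β β₀ : ℝ) : ℝ :=
  β * Real.log (β / β₀) + (1 - β) * Real.log ((1 - β) / (1 - β₀))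

lemma klB_pos {β p : ℝ} (hβ : β ∈ Set.Ioo (0:ℝ) 1) (hp : p ∈ Set.Ioo (0:ℝ) 1)
    (hne : β ≠ p) : 0 < klB β p := by
  obtain ⟨hβ0, hβ1⟩ := hβ
  obtain ⟨hp0, hp1⟩ := hp
  have hβ1' : (0:ℝ) < 1 - β := by linarith
  have hp1' : (0:ℝ) < 1 - p := by linarith
  have h1 : Real.log (p / β) < p / β - 1 := by
    apply Real.log_lt_sub_one_of_pos (by positivity)
    intro h
    rw [div_eq_one_iff_eq (ne_of_gt hβ0)] at h
    exact hne h.symm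
  have h2 : Real.log ((1 - p) / (1 - β)) < (1 - p) / (1 - β) - 1 := by
    apply Real.log_lt_sub_one_of_pos (by positivity)
    intro h
    rw [div_eq_one_iff_eq (ne_of_gt hβ1')] at h
    exact hne (by linarith)
  have e1 : Real.log (β / p) = - Real.log (p / β) := by
    rw [← Real.log_inv]; congr 1; rw [inv_div]
  have e2 : Real.log ((1 - β) / (1 - p)) = - Real.log ((1 - p) / (1 - β)) := by
    rw [← Real.log_inv]; congr 1; rw [inv_div]
  have hb1 : β * Real.log (p / β) < β * (p / β - 1) := mul_lt_mul_of_pos_left h1 hβ0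
  have hb2 : (1 - β) * Real.log ((1 - p) / (1 - β)) < (1 - β) * ((1 - p) / (1 - β) - 1) :=
    mul_lt_mul_of_pos_left h2 hβ1'
  have c1 : β * (p / β - 1) = p - β := by field_simp
  have c2 : (1 - β) * ((1 - p) / (1 - β) - 1) = β - p := by field_simp; ring
  unfold klB
  rw [e1, e2]
  nlinarith

/-- **Unique maximizer of the penalized binary entropy.**
For `β₀ ∈ (0,1)` and `λ > 0`, the function `φ(β) = h_b(β) - λ d(β‖β₀)` on `(0,1)` attains
its maximum at the unique point `β* = (1 + ((1-β₀)/β₀)^{λ/(1+λ)})⁻¹`, which satisfies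
`(1-β*)/β* = ((1-β₀)/β₀)^{λ/(1+λ)}`. -/
theorem binary_entropy_penalized_max
    (β₀ lam : ℝ) (hβ₀ : β₀ ∈ Set.Ioo (0 : ℝ) 1) (hlam : 0 < lam)
    (βstar : ℝ)
    (hβstar : βstar = (1 + ((1 - β₀) / β₀) ^ (lam / (1 + lam)))⁻¹) :
    βstar ∈ Set.Ioo (0 : ℝ) 1 ∧
    (1 - βstar) / βstar = ((1 - β₀) / β₀) ^ (lam / (1 + lam)) ∧
    ∀ β ∈ Set.Ioo (0 : ℝ) 1,
      (entB β - lam * klB β β₀ ≤ entB βstar - lam * klB βstar β₀) ∧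
      (entB β - lam * klB β β₀ = entB βstar - lam * klB βstar β₀ → β = βstar) := by
  obtain ⟨hβ₀0, hβ₀1⟩ := hβ₀
  have hβ₀1' : (0:ℝ) < 1 - β₀ := by linarith
  set t : ℝ := ((1 - β₀) / β₀) ^ (lam / (1 + lam)) with ht_def
  have ht : 0 < t := Real.rpow_pos_of_pos (by positivity) _
  have hs0 : 0 < βstar := by rw [hβstar]; positivity
  have hs1 : βstar < 1 := by
    rw [hβstar]
    rw [inv_lt_one_iff₀]
    right; linarith
  have hs1' : (0:ℝ) < 1 - βstar := by linarith
  have hmem : βstar ∈ Set.Ioo (0:ℝ) 1 := ⟨hs0, hs1⟩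
  have hratio : (1 - βstar) / βstar = t := by
    rw [hβstar]; field_simp; ring
  have hlogt : Real.log t = (lam / (1 + lam)) * Real.log ((1 - β₀) / β₀) :=
    Real.log_rpow (by positivity) _
  have hlam1 : (0:ℝ) < 1 + lam := by linarith
  -- key log identity
  have key : (1 + lam) * (Real.log (1 - βstar) - Real.log βstar)
      = lam * (Real.log (1 - β₀) - Real.log β₀) := by
    have h1 : Real.log ((1 - βstar) / βstar) = Real.log (1 - βstar) - Real.log βstar :=
      Real.log_div (ne_of_gt hs1') (ne_of_gt hs0)
    have h2 : Real.log ((1 - β₀) / β₀) = Real.log (1 - β₀) - Real.log β₀ :=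
      Real.log_div (ne_of_gt hβ₀1') (ne_of_gt hβ₀0)
    have := hlogt
    rw [← hratio, h1, h2] at this
    field_simp at this
    linarith [this]
  refine ⟨hmem, hratio, ?_⟩
  intro β hβ
  obtain ⟨hb0, hb1⟩ := hβ
  have hb1' : (0:ℝ) < 1 - β := by linarith
  -- the central identity
  have ident : entB βstar - lam * klB βstar β₀ - (entB β - lam * klB β β₀)
      = (1 + lam) * klB β βstar := by
    unfold entB klB
    rw [Real.log_div (ne_of_gt hb0) (ne_of_gt hβ₀0),
        Real.log_div (ne_of_gt hb1') (ne_of_gt hβ₀1'),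
        Real.log_div (ne_of_gt hs0) (ne_of_gt hβ₀0),
        Real.log_div (ne_of_gt hs1') (ne_of_gt hβ₀1'),
        Real.log_div (ne_of_gt hb0) (ne_of_gt hs0),
        Real.log_div (ne_of_gt hb1') (ne_of_gt hs1')]
    linear_combination (βstar - β) * key
  constructor
  · rcases eq_or_ne β βstar with h | h
    · rw [h]
    · have := klB_pos ⟨hb0, hb1⟩ hmem h
      nlinarith
  · intro heq
    by_contra h
    have := klB_pos ⟨hb0, hb1⟩ hmem h
    nlinarith
end
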